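/- Let π ∈ S_n with LIS(π) = 2, LDS(π) = s, n = s+r, s ≥ r ≥ 1, and inv(π) = C(s,2)+C(r,2)+Δ with Δ < r. Then there exists a position i with 1 ≤ i ≤ Δ+1 such that either (a) π(i+t) = s+1−(i+t) for all 0 ≤ t < s−Δ and there is j with s+1 ≤ j ≤ s+Δ+1 such that π(j+t) = 2s+r+1−(j+t) for all 0 ≤ t < r−Δ, or (b) π(i+t) = r+1−(i+t) for all 0 ≤ t < r−Δ and there is j with r+1 ≤ j ≤ r+Δ+1 such that π(j+t) = s+2r+1−(j+t) for all 0 ≤ t < s−Δ. -/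

import Mathlib

/-!
The right-to-left maxima of `π` form a decreasing subsequence `B`, and since `π` has no increasing
subsequence of length three, so does the complement `A`. Hence
`inv π = C(|A|,2) + C(|B|,2) + c`, where `c` counts the inversions between `A` and `B`. A longest
decreasing subsequence has `p` points in `A` and `s - p` in `B`, and all `p (s - p)` pairs between
them are such cross inversions; together with `inv π = C(s,2) + C(r,2) + Δ` and `Δ < r` this forces
`{|A|, |B|} = {s, r}` and `c = Δ`. So at most `Δ` elements of `A`, and at most `Δ` of `B`, take part
in a cross inversion. The others lie before and below (resp. after and above) the whole other
block, hence occupy consecutive positions where `π` agrees with the layered permutation.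
-/

/-- The number of inversions of a permutation of `Fin n`:
pairs of positions `i < j` with `π i > π j`. -/
def invCount {n : ℕ} (π : Equiv.Perm (Fin n)) : ℕ :=
  (Finset.univ.filter fun p : Fin n × Fin n => p.1 < p.2 ∧ π p.2 < π p.1).card

/-- The length of the longest (strictly) increasing subsequence of `π`. -/
noncomputable def lisLen {n : ℕ} (π : Equiv.Perm (Fin n)) : ℕ :=
  sSup {k | ∃ t : Finset (Fin n), t.card = k ∧ StrictMonoOn ⇑π ↑t}

/-- The length of the longest (strictly) decreasing subsequence of `π`. -/
noncomputable def ldsLen {n : ℕ} (π : Equiv.Perm (Fin n)) : ℕ :=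
  sSup {k | ∃ t : Finset (Fin n), t.card = k ∧ StrictAntiOn ⇑π ↑t}

open Finset Equiv

variable {n : ℕ}

section Subsequences

lemma bddAbove_card_subsequences (P : Finset (Fin n) → Prop) :
    BddAbove {k | ∃ t : Finset (Fin n), t.card = k ∧ P t} := by
  refine ⟨n, ?_⟩
  rintro _ ⟨t, rfl, -⟩
  simpa using card_le_univ t

variable {π : Perm (Fin n)}

lemma card_le_lisLen {t : Finset (Fin n)} (ht : StrictMonoOn π t) : t.card ≤ lisLen π :=
  le_csSup (bddAbove_card_subsequences _) ⟨t, rfl, ht⟩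

lemma card_le_ldsLen {t : Finset (Fin n)} (ht : StrictAntiOn π t) : t.card ≤ ldsLen π :=
  le_csSup (bddAbove_card_subsequences _) ⟨t, rfl, ht⟩

lemma exists_strictAntiOn_card_eq_ldsLen :
    ∃ t : Finset (Fin n), t.card = ldsLen π ∧ StrictAntiOn π t :=
  Nat.sSup_mem (s := {k | ∃ t : Finset (Fin n), t.card = k ∧ StrictAntiOn π t})
    ⟨0, ∅, rfl, by simp [StrictAntiOn]⟩ (bddAbove_card_subsequences _)

lemma not_lt_of_lisLen_le_two (h : lisLen π ≤ 2) {i j k : Fin n} (hij : i < j) (hjk : j < k)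
    (h₁ : π i < π j) : ¬ π j < π k := by
  intro h₂
  have hmono : StrictMonoOn π ({i, j, k} : Finset (Fin n)) := by
    intro x hx y hy hxy
    simp only [coe_insert, coe_singleton, Set.mem_insert_iff, Set.mem_singleton_iff] at hx hy
    rcases hx with rfl | rfl | rfl <;> rcases hy with rfl | rfl | rfl <;> order
  have hcard : ({i, j, k} : Finset (Fin n)).card = 3 := by
    rw [card_insert_of_notMem (by simp [hij.ne, (hij.trans hjk).ne]),
      card_insert_of_notMem (by simp [hjk.ne]), card_singleton]
  have := card_le_lisLen hmono
  omega

end Subsequences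

def rlMaxima (π : Perm (Fin n)) : Finset (Fin n) :=
  univ.filter fun i => ∀ j, i < j → π j < π i

lemma strictAntiOn_compl_rlMaxima {π : Perm (Fin n)} (h : lisLen π ≤ 2) :
    StrictAntiOn π ((rlMaxima π)ᶜ : Finset (Fin n)) := by
  intro p hp p' hp' hpp'
  simp only [rlMaxima, coe_compl, coe_filter, mem_univ, true_and, Set.mem_compl_iff,
    Set.mem_ofPred_eq, not_forall, not_lt] at hp'
  obtain ⟨j, hp'j, hj⟩ := hp'
  have hj : π p' < π j := hj.lt_of_ne (π.injective.ne hp'j.ne)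
  by_contra hle
  exact not_lt_of_lisLen_le_two h hpp' hp'j
    ((not_lt.mp hle).lt_of_ne (π.injective.ne hpp'.ne)) hj

section Inversions

variable (π : Perm (Fin n)) (A : Finset (Fin n))

def inversions : Finset (Fin n × Fin n) :=
  univ.filter fun e => e.1 < e.2 ∧ π e.2 < π e.1

def crossInversions : Finset (Fin n × Fin n) :=
  (inversions π).filter fun e => e.1 ∈ A ↔ e.2 ∉ A

variable {π A}

lemma card_inversions_filter_of_strictAntiOn (hA : StrictAntiOn π A) :
    ((inversions π).filter fun e => e.1 ∈ A ∧ e.2 ∈ A).card = A.card.choose 2 := by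
  rw [← card_product_filter_lt]
  congr 1
  ext ⟨a, b⟩
  simp only [inversions, mem_filter, mem_univ, true_and, mem_product]
  exact ⟨fun h => ⟨h.2, h.1.1⟩, fun h => ⟨⟨h.2, hA h.1.1 h.1.2 h.2⟩, h.1⟩⟩

lemma invCount_eq_of_strictAntiOn (hA : StrictAntiOn π A)
    (hAc : StrictAntiOn π (Aᶜ : Finset (Fin n))) :
    invCount π = A.card.choose 2 + Aᶜ.card.choose 2 + (crossInversions π A).card := by
  have hsplit := card_filter_add_card_filter_not (s := inversions π) fun e => e.1 ∈ A ↔ e.2 ∈ A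
  have hsame := card_filter_add_card_filter_not
    (s := (inversions π).filter fun e => e.1 ∈ A ↔ e.2 ∈ A) fun e => e.1 ∈ A
  rw [filter_filter, filter_filter] at hsame
  rw [← card_inversions_filter_of_strictAntiOn hA, ← card_inversions_filter_of_strictAntiOn hAc,
    show invCount π = (inversions π).card from rfl, ← hsplit, ← hsame]
  congr 2
  · exact congrArg card (filter_congr fun e _ => by tauto)
  · exact congrArg card (filter_congr fun e _ => by simp only [mem_compl]; tauto)
  · exact filter_congr fun e _ => by tauto

lemma card_inter_mul_card_sdiff_le {c : Finset (Fin n)} (hc : StrictAntiOn π c) :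
    (c ∩ A).card * (c \ A).card ≤ (crossInversions π A).card := by
  rw [← card_product]
  refine card_le_card_of_injOn (fun e => if e.1 < e.2 then e else e.swap) ?_ ?_
  · rintro ⟨a, b⟩ hab
    simp only [coe_product, Set.mem_prod, mem_coe, mem_inter, mem_sdiff] at hab
    have hne : a ≠ b := fun h => hab.2.2 (h ▸ hab.1.2)
    simp only [crossInversions, inversions, coe_filter, mem_filter, mem_univ, true_and,
      Set.mem_ofPred_eq]
    rcases hne.lt_or_gt with h | h
    · simp only [if_pos h]
      exact ⟨⟨h, hc hab.1.1 hab.2.1 h⟩, by tauto⟩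
    · simp only [if_neg h.not_gt, Prod.fst_swap, Prod.snd_swap]
      exact ⟨⟨h, hc hab.2.1 hab.1.1 h⟩, by tauto⟩
  · rintro ⟨a, b⟩ hab ⟨a', b'⟩ hab' heq
    simp only [coe_product, Set.mem_prod, mem_coe, mem_inter, mem_sdiff] at hab hab'
    simp only at heq
    split_ifs at heq <;> simp_all [Prod.ext_iff]

end Inversions

section Blocks

variable (π : Perm (Fin n)) (A : Finset (Fin n))

def lowerBlock : Finset (Fin n) :=
  A.filter fun p => ∀ q ∉ A, p < q ∧ π p < π q

def upperBlock : Finset (Fin n) :=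
  Aᶜ.filter fun q => ∀ p ∈ A, p < q ∧ π p < π q

lemma card_filter_apply_lt (a : Fin n) : (univ.filter fun x => π x < a).card = a := by
  rw [card_equiv π (t := Iio a) (by simp), Fin.card_Iio]

lemma card_filter_lt_apply (a : Fin n) : (univ.filter fun x => a < π x).card = n - 1 - a := by
  rw [card_equiv π (t := Ioi a) (by simp), Fin.card_Ioi]

variable {π A}

lemma mem_crossInversions_of_not_lt (hB : ∀ q ∉ A, ∀ j, q < j → π j < π q)
    {p q : Fin n} (hp : p ∈ A) (hq : q ∉ A) (h : ¬ (p < q ∧ π p < π q)) :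
    (p, q) ∈ crossInversions π A ∨ (q, p) ∈ crossInversions π A := by
  have hne : p ≠ q := fun h => hq (h ▸ hp)
  simp only [crossInversions, inversions, mem_filter, mem_univ, true_and]
  rcases hne.lt_or_gt with hpq | hqp
  · exact Or.inl ⟨⟨hpq, (not_lt.mp (h ⟨hpq, ·⟩)).lt_of_ne (π.injective.ne hne.symm)⟩, by tauto⟩
  · exact Or.inr ⟨⟨hqp, hB q hq p hqp⟩, by tauto⟩

lemma card_le_card_lowerBlock_add (hB : ∀ q ∉ A, ∀ j, q < j → π j < π q) :
    A.card ≤ (lowerBlock π A).card + (crossInversions π A).card := by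
  have hbad : A \ lowerBlock π A ⊆
      (crossInversions π A).image fun e => if e.1 ∈ A then e.1 else e.2 := by
    intro p hp
    rw [mem_sdiff] at hp
    obtain ⟨q, hq, h⟩ := not_forall₂.mp fun h => hp.2 (mem_filter.mpr ⟨hp.1, h⟩)
    rcases mem_crossInversions_of_not_lt hB hp.1 hq h with he | he
    · exact mem_image.mpr ⟨_, he, if_pos hp.1⟩
    · exact mem_image.mpr ⟨_, he, if_neg hq⟩
  have := card_sdiff_add_card_eq_card (s := lowerBlock π A) (filter_subset _ _)
  have := (card_le_card hbad).trans card_image_le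
  omega

lemma card_compl_le_card_upperBlock_add (hB : ∀ q ∉ A, ∀ j, q < j → π j < π q) :
    Aᶜ.card ≤ (upperBlock π A).card + (crossInversions π A).card := by
  have hbad : Aᶜ \ upperBlock π A ⊆
      (crossInversions π A).image fun e => if e.1 ∈ A then e.2 else e.1 := by
    intro q hq
    rw [mem_sdiff] at hq
    obtain ⟨p, hp, h⟩ := not_forall₂.mp fun h => hq.2 (mem_filter.mpr ⟨hq.1, h⟩)
    rw [mem_compl] at hq
    rcases mem_crossInversions_of_not_lt hB hp hq.1 h with he | he
    · exact mem_image.mpr ⟨_, he, if_pos hp⟩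
    · exact mem_image.mpr ⟨_, he, if_neg hq.1⟩
  have := card_sdiff_add_card_eq_card (s := upperBlock π A) (filter_subset _ _)
  have := (card_le_card hbad).trans card_image_le
  omega

lemma apply_add_add_one_of_mem_lowerBlock (hA : StrictAntiOn π A) {p : Fin n}
    (hp : p ∈ lowerBlock π A) : (π p : ℕ) + p + 1 = A.card := by
  simp only [lowerBlock, mem_filter] at hp
  obtain ⟨hpA, hp⟩ := hp
  have hle : ∀ x ≤ p, x ∈ A := fun x hx => by_contra fun hx' => (hp x hx').1.not_ge hx
  have hsplit : A = Iic p ∪ univ.filter fun x => π x < π p := by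
    ext x
    simp only [mem_union, mem_Iic, mem_filter, mem_univ, true_and]
    refine ⟨fun hx => (le_or_gt x p).imp_right (hA hpA hx), ?_⟩
    rintro (hx | hx)
    · exact hle x hx
    · exact by_contra fun hx' => (hp x hx').2.not_gt hx
  have hdisj : Disjoint (Iic p) (univ.filter fun x => π x < π p) := by
    refine disjoint_left.mpr fun x hx hx' => ?_
    rw [mem_Iic] at hx
    rw [mem_filter] at hx'
    rcases hx.lt_or_eq with hx | rfl
    · exact (hA (hle x hx.le) hpA hx).not_gt hx'.2
    · exact lt_irrefl _ hx'.2
  rw [hsplit, card_union_of_disjoint hdisj, Fin.card_Iic, card_filter_apply_lt]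
  omega

lemma apply_add_add_one_of_mem_upperBlock (hB : ∀ q ∉ A, ∀ j, q < j → π j < π q)
    {q : Fin n} (hq : q ∈ upperBlock π A) : (π q : ℕ) + q + 1 = n + A.card := by
  simp only [upperBlock, mem_filter, mem_compl] at hq
  obtain ⟨hqA, hq⟩ := hq
  have hge : ∀ x, q ≤ x → x ∉ A := fun x hx hx' => (hq x hx').1.not_ge hx
  have hsplit : Aᶜ = Ici q ∪ univ.filter fun x => π q < π x := by
    ext x
    simp only [mem_compl, mem_union, mem_Ici, mem_filter, mem_univ, true_and]
    refine ⟨fun hx => (le_or_gt q x).imp_right (hB x hx q), ?_⟩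
    rintro (hx | hx)
    · exact hge x hx
    · exact fun hx' => (hq x hx').2.not_gt hx
  have hdisj : Disjoint (Ici q) (univ.filter fun x => π q < π x) := by
    refine disjoint_left.mpr fun x hx hx' => ?_
    rw [mem_Ici] at hx
    rw [mem_filter] at hx'
    rcases hx.lt_or_eq with hx | rfl
    · exact (hB q hqA x hx).not_gt hx'.2
    · exact lt_irrefl _ hx'.2
  have hcard := card_add_card_compl A
  rw [hsplit, card_union_of_disjoint hdisj, Fin.card_Ici, card_filter_lt_apply,
    Fintype.card_fin] at hcard
  have := q.isLt
  have := (π q).isLt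
  omega

lemma ordConnected_lowerBlock (hA : StrictAntiOn π A) :
    (lowerBlock π A : Set (Fin n)).OrdConnected := by
  refine Set.ordConnected_of_Ioo fun p hp r hr _ x hx => ?_
  simp only [lowerBlock, coe_filter, Set.mem_ofPred_eq] at hp hr ⊢
  have hxA : x ∈ A := by_contra fun hx' => (hr.2 x hx').1.not_gt hx.2
  exact ⟨hxA, fun q hq => ⟨hx.2.trans (hr.2 q hq).1,
    (hA hp.1 hxA hx.1).trans (hp.2 q hq).2⟩⟩

lemma ordConnected_upperBlock (hB : ∀ q ∉ A, ∀ j, q < j → π j < π q) :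
    (upperBlock π A : Set (Fin n)).OrdConnected := by
  refine Set.ordConnected_of_Ioo fun p hp r hr _ x hx => ?_
  simp only [upperBlock, coe_filter, mem_compl, Set.mem_ofPred_eq] at hp hr ⊢
  have hxA : x ∉ A := fun hx' => (hp.2 x hx').1.not_gt hx.1
  exact ⟨hxA, fun a ha => ⟨(hp.2 a ha).1.trans hx.1,
    (hr.2 a ha).2.trans (hB x hxA r hx.2)⟩⟩

end Blocks

lemma exists_run_of_ordConnected {G : Finset (Fin n)} (hG : (G : Set (Fin n)).OrdConnected)
    {lo N Δ : ℕ} (hsub : ∀ p ∈ G, lo ≤ (p : ℕ) ∧ (p : ℕ) < lo + N) (hcard : N ≤ G.card + Δ)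
    (hΔ : Δ < N) :
    ∃ i, lo ≤ i ∧ i ≤ lo + Δ ∧ ∀ t < N - Δ, ∀ h : i + t < n, (⟨i + t, h⟩ : Fin n) ∈ G := by
  have hne : G.Nonempty := card_pos.mp (by omega)
  have hmin := G.min'_mem hne
  have hmax := G.max'_mem hne
  have hlen : G.card ≤ G.max' hne + 1 - G.min' hne :=
    (card_le_card fun x hx => mem_Icc.mpr ⟨G.min'_le x hx, G.le_max' x hx⟩).trans_eq
      (Fin.card_Icc _ _)
  have hlo := hsub _ hmin
  have hhi := hsub _ hmax
  refine ⟨G.min' hne, hlo.1, by omega, fun t ht h => hG.out hmin hmax ⟨?_, ?_⟩⟩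
  · simp [Fin.le_def]
  · rw [Fin.le_def]
    dsimp only
    omega

section Runs

variable {π : Perm (Fin n)} {A : Finset (Fin n)} {Δ : ℕ}

lemma exists_run_lowerBlock (hA : StrictAntiOn π A) (hB : ∀ q ∉ A, ∀ j, q < j → π j < π q)
    (hcross : (crossInversions π A).card ≤ Δ) (hΔ : Δ < A.card) :
    ∃ i ≤ Δ, ∀ t < A.card - Δ, ∀ h : i + t < n,
      (π ⟨i + t, h⟩ : ℕ) + (i + t) + 1 = A.card := by
  have hsub (p) (hp : p ∈ lowerBlock π A) : 0 ≤ (p : ℕ) ∧ (p : ℕ) < 0 + A.card := by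
    have := apply_add_add_one_of_mem_lowerBlock hA hp
    omega
  have := card_le_card_lowerBlock_add hB
  obtain ⟨i, -, hi, hrun⟩ :=
    exists_run_of_ordConnected (ordConnected_lowerBlock hA) hsub (by omega) hΔ
  exact ⟨i, by omega, fun t ht h => apply_add_add_one_of_mem_lowerBlock hA (hrun t ht h)⟩

lemma exists_run_upperBlock (hB : ∀ q ∉ A, ∀ j, q < j → π j < π q)
    (hcross : (crossInversions π A).card ≤ Δ) (hΔ : Δ < Aᶜ.card) :
    ∃ j, A.card ≤ j ∧ j ≤ A.card + Δ ∧ ∀ t < Aᶜ.card - Δ, ∀ h : j + t < n,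
      (π ⟨j + t, h⟩ : ℕ) + (j + t) + 1 = n + A.card := by
  have hn : A.card + Aᶜ.card = n := by simp
  have hsub (q) (hq : q ∈ upperBlock π A) : A.card ≤ (q : ℕ) ∧ (q : ℕ) < A.card + Aᶜ.card := by
    have := apply_add_add_one_of_mem_upperBlock hB hq
    have := (π q).isLt
    omega
  have := card_compl_le_card_upperBlock_add hB
  obtain ⟨j, hj, hj', hrun⟩ :=
    exists_run_of_ordConnected (ordConnected_upperBlock hB) hsub (by omega) hΔ
  exact ⟨j, hj, hj', fun t ht h => apply_add_add_one_of_mem_upperBlock hB (hrun t ht h)⟩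

end Runs

/- When `a + b = s + r`, `C(s,2) + C(r,2) - C(a,2) - C(b,2) = (a - r)(s - a)`, whereas for
`r < a < s` the constraints force `p * q ≥ (a - r)(s - a) + r`. -/
lemma eq_or_eq_of_choose_two_add_mul_le {s r a b p q Δ : ℕ} (hab : a + b = s + r) (ha : a ≤ s)
    (hb : b ≤ s) (hp : p ≤ a) (hq : q ≤ b) (hpq : p + q = s) (hΔ : Δ < r)
    (h : a.choose 2 + b.choose 2 + p * q ≤ s.choose 2 + r.choose 2 + Δ) : a = s ∨ a = r := by
  by_contra! hne
  have h' := (Nat.cast_le (α := ℚ)).mpr h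
  push_cast [Nat.cast_choose_two] at h'
  have hra : (r : ℚ) + 1 ≤ a := by norm_cast; omega
  have has : (a : ℚ) + 1 ≤ s := by norm_cast; omega
  have hx : (a : ℚ) ≤ p + r := by norm_cast; omega
  have hy : (s : ℚ) ≤ q + a := by norm_cast; omega
  have hab' : (a : ℚ) + b = s + r := by exact_mod_cast hab
  have hpq' : (p : ℚ) + q = s := by exact_mod_cast hpq
  have hΔ' : (Δ : ℚ) + 1 ≤ r := by exact_mod_cast hΔ
  nlinarith [mul_nonneg (sub_nonneg.mpr hx) (sub_nonneg.mpr has),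
    mul_nonneg (sub_nonneg.mpr hy) (sub_nonneg.mpr hra),
    mul_nonneg (sub_nonneg.mpr hx) (sub_nonneg.mpr hy)]

lemma card_eq_and_card_crossInversions_eq {s r Δ : ℕ} {π : Perm (Fin (s + r))}
    {A : Finset (Fin (s + r))} (hA : StrictAntiOn π A) (hAc : StrictAntiOn π (Aᶜ : Finset _))
    (hlds : ldsLen π = s) (hΔ : Δ < r) (hinv : invCount π = s.choose 2 + r.choose 2 + Δ) :
    (A.card = s ∨ A.card = r) ∧ (crossInversions π A).card = Δ := by
  obtain ⟨c, hcs, hcanti⟩ := exists_strictAntiOn_card_eq_ldsLen (π := π)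
  have hc := (card_inter_add_card_sdiff c A).trans hcs
  have hn : A.card + Aᶜ.card = s + r := by simp
  have hAs := card_le_ldsLen hA
  have hAcs := card_le_ldsLen hAc
  have hdecomp := invCount_eq_of_strictAntiOn hA hAc
  have hmul := card_inter_mul_card_sdiff_le (A := A) hcanti
  have hsize : A.card = s ∨ A.card = r :=
    eq_or_eq_of_choose_two_add_mul_le (p := (c ∩ A).card) (q := (c \ A).card) hn
      (by omega) (by omega)
      (card_le_card inter_subset_right)
      (card_le_card fun x hx => mem_compl.mpr (mem_sdiff.mp hx).2)
      (by omega) hΔ (by omega)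
  refine ⟨hsize, ?_⟩
  rcases hsize with h | h
  · rw [h, show Aᶜ.card = r by omega] at hdecomp
    omega
  · rw [h, show Aᶜ.card = s by omega] at hdecomp
    omega

theorem stmt_15_general (s r Δ : ℕ) (hrs : r ≤ s) (hΔ : Δ < r)
    (π : Equiv.Perm (Fin (s + r)))
    (hlis : lisLen π = 2) (hlds : ldsLen π = s)
    (hinv : invCount π = s.choose 2 + r.choose 2 + Δ) :
    ((∃ i ≤ Δ, ∀ t < s - Δ, ∀ h : i + t < s + r,
        ((π ⟨i + t, h⟩ : Fin (s + r)) : ℕ) = s - 1 - (i + t)) ∧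
     (∃ j, s ≤ j ∧ j ≤ s + Δ ∧ ∀ t < r - Δ, ∀ h : j + t < s + r,
        ((π ⟨j + t, h⟩ : Fin (s + r)) : ℕ) = 2 * s + r - 1 - (j + t))) ∨
    ((∃ i ≤ Δ, ∀ t < r - Δ, ∀ h : i + t < s + r,
        ((π ⟨i + t, h⟩ : Fin (s + r)) : ℕ) = r - 1 - (i + t)) ∧
     (∃ j, r ≤ j ∧ j ≤ r + Δ ∧ ∀ t < s - Δ, ∀ h : j + t < s + r,
        ((π ⟨j + t, h⟩ : Fin (s + r)) : ℕ) = s + 2 * r - 1 - (j + t))) := by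
  set A := (rlMaxima π)ᶜ
  have hA : StrictAntiOn π A := strictAntiOn_compl_rlMaxima hlis.le
  have hB : ∀ q ∉ A, ∀ j, q < j → π j < π q := by simp [A, rlMaxima]
  have hAc : StrictAntiOn π (Aᶜ : Finset _) := fun q hq j _ hqj => hB q (by simpa using hq) j hqj
  obtain ⟨hsize, hcross⟩ := card_eq_and_card_crossInversions_eq hA hAc hlds hΔ hinv
  have hn : A.card + Aᶜ.card = s + r := by simp
  obtain ⟨i, hi, hlow⟩ := exists_run_lowerBlock hA hB hcross.le (by omega)
  obtain ⟨j, hj, hj', hup⟩ := exists_run_upperBlock hB hcross.le (by omega)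
  rcases hsize with h | h
  · refine .inl ⟨⟨i, hi, fun t ht hlt => ?_⟩, ⟨j, by omega, by omega, fun t ht hlt => ?_⟩⟩
    · have := hlow t (by omega) hlt; omega
    · have := hup t (by omega) hlt; omega
  · refine .inr ⟨⟨i, hi, fun t ht hlt => ?_⟩, ⟨j, by omega, by omega, fun t ht hlt => ?_⟩⟩
    · have := hlow t (by omega) hlt; omega
    · have := hup t (by omega) hlt; omega

/-- Corollary 4.6, structure theorem; 1-indexed statement
translated to 0-indexed positions: `π(i) = s+1-i` at the 1-indexed position
`i` becomes value `s-1-pos` at 0-indexed position `pos`, etc.: every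
permutation of shape `λ' = (s,r)` with `Δ < r` extra inversions agrees with
one of the two minimal permutations on a run of `s-Δ` consecutive positions
in one block and `r-Δ` consecutive positions in the other. -/
theorem stmt_15 (s r Δ : ℕ) (hr : 1 ≤ r) (hrs : r ≤ s) (hΔ : Δ < r)
    (π : Equiv.Perm (Fin (s + r)))
    (hlis : lisLen π = 2) (hlds : ldsLen π = s)
    (hinv : invCount π = s.choose 2 + r.choose 2 + Δ) :
    ((∃ i ≤ Δ, ∀ t < s - Δ, ∀ h : i + t < s + r,
        ((π ⟨i + t, h⟩ : Fin (s + r)) : ℕ) = s - 1 - (i + t)) ∧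
     (∃ j, s ≤ j ∧ j ≤ s + Δ ∧ ∀ t < r - Δ, ∀ h : j + t < s + r,
        ((π ⟨j + t, h⟩ : Fin (s + r)) : ℕ) = 2 * s + r - 1 - (j + t))) ∨
    ((∃ i ≤ Δ, ∀ t < r - Δ, ∀ h : i + t < s + r,
        ((π ⟨i + t, h⟩ : Fin (s + r)) : ℕ) = r - 1 - (i + t)) ∧
     (∃ j, r ≤ j ∧ j ≤ r + Δ ∧ ∀ t < s - Δ, ∀ h : j + t < s + r,
        ((π ⟨j + t, h⟩ : Fin (s + r)) : ℕ) = s + 2 * r - 1 - (j + t))) :=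
  stmt_15_general s r Δ hrs hΔ π hlis hlds hinv
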